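/- arXiv:1206.0576 — 4 statements merged into one kernel-verified Lean document; each statement's English description precedes it below -/
import Mathlib

section
/- Criterion C1 (Proposition 3.1): Under the stated invertibility hypothesis, the determinant of XᵗX equals the product over all strata of Ñ(j,l)·(N(j,l) − Ñ(j,l)); equivalently, det(σ²·(XᵗX)⁻¹) = σ^{2(2+2p)} / Π_{(j,l)∈S} Ñ(j,l)·(N(j,l) − Ñ(j,l)) for every σ > 0. -/
open Matrix Finset

noncomputable section

/-- The set of strata `{0,…,J} × {0,…,L}`. -/
abbrev Stratum (J L : ℕ) := Fin (J + 1) × Fin (L + 1)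

/-- Index type for the `p = J + L + J·L` dummy/interaction coordinates. -/
abbrev Idx (J L : ℕ) := Fin J ⊕ Fin L ⊕ (Fin J × Fin L)

/-- Full dummy coding of a stratum, with all interactions. -/
def dummy (J L : ℕ) (s : Stratum J L) : Idx J L → ℝ := fun k =>
  match k with
  | Sum.inl j' => if (s.1 : ℕ) = (j' : ℕ) + 1 then 1 else 0
  | Sum.inr (Sum.inl l') => if (s.2 : ℕ) = (l' : ℕ) + 1 then 1 else 0
  | Sum.inr (Sum.inr q) =>
      if (s.1 : ℕ) = (q.1 : ℕ) + 1 ∧ (s.2 : ℕ) = (q.2 : ℕ) + 1 then 1 else 0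

/-- Column index type of the design matrix: dimension `2 + 2p`. -/
abbrev Cols (J L : ℕ) := Fin 2 ⊕ (Idx J L ⊕ Idx J L)

/-- The design matrix `X`, whose `i`-th row is `(δ_i, 1-δ_i, δ_i f(z_i)ᵗ, (1-δ_i) f(z_i)ᵗ)`. -/
def designX (J L n : ℕ) (z : Fin n → Stratum J L) (δ : Fin n → Bool) :
    Matrix (Fin n) (Cols J L) ℝ :=
  Matrix.of fun i c =>
    match c with
    | Sum.inl a => if a = 0 then (if δ i then (1 : ℝ) else 0) else (if δ i then 0 else 1)
    | Sum.inr (Sum.inl k) => if δ i then dummy J L (z i) k else 0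
    | Sum.inr (Sum.inr k) => if δ i then 0 else dummy J L (z i) k

/-- `N(j,l)`: the size of stratum `(j,l)`. -/
def strN (J L n : ℕ) (z : Fin n → Stratum J L) (s : Stratum J L) : ℕ :=
  (Finset.univ.filter fun i => z i = s).card

/-- `Ñ(j,l)`: the number of members of stratum `(j,l)` assigned to treatment `A`. -/
def strNA (J L n : ℕ) (z : Fin n → Stratum J L) (δ : Fin n → Bool) (s : Stratum J L) : ℕ :=
  (Finset.univ.filter fun i => z i = s ∧ δ i = true).card

/-!
Row `i` of `X` depends only on the cell `(z i, δ i) ∈ S × Bool`. Matching the `2 + 2p` columns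
with the `2 |S|` cells, `X` selects rows of the square matrix `C = (A_J ⊗ A_L) ⊗ 1`, where `A_m`
is the intercept-plus-dummy coding of a factor with `m + 1` levels; hence `XᵗX = Cᵗ D C` with
`D` the diagonal matrix of cell counts `Ñ` and `N - Ñ`. Each `A_m` is unit lower triangular, so
`det C = 1` and `det (XᵗX) = det D`.
-/

open scoped Kronecker

namespace Matrix

variable {ι κ m R : Type*} [Fintype ι] [Fintype κ] [DecidableEq κ]

theorem transpose_submatrix_mul_submatrix [CommSemiring R] (M : Matrix κ m R) (g : ι → κ) :
    (M.submatrix g id)ᵀ * M.submatrix g id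
      = Mᵀ * diagonal (fun k => (#{i | g i = k} : R)) * M := by
  ext a b
  rw [mul_apply, mul_apply]
  simp only [transpose_apply, submatrix_apply, id]
  rw [← Finset.sum_fiberwise' univ g (fun k => M k a * M k b)]
  refine Finset.sum_congr rfl fun k _ => ?_
  rw [Finset.sum_const, nsmul_eq_mul, mul_diagonal, transpose_apply]
  ring

theorem det_transpose_submatrix_mul_submatrix [CommRing R] [Fintype m] [DecidableEq m]
    (M : Matrix κ κ R) (g : ι → κ) (e : m ≃ κ) :
    det ((M.submatrix g e)ᵀ * M.submatrix g e) = det M ^ 2 * ∏ k, (#{i | g i = k} : R) := by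
  have h : (M.submatrix g e)ᵀ * M.submatrix g e
      = (Mᵀ * diagonal (fun k => (#{i | g i = k} : R)) * M).submatrix e e := by
    rw [← transpose_submatrix_mul_submatrix, transpose_submatrix,
      ← submatrix_mul_equiv _ _ _ (Equiv.refl _)]
    rfl
  rw [h, det_submatrix_equiv_self, det_mul, det_mul, det_transpose, det_diagonal]
  ring

theorem det_smul_inv {K : Type*} [Field K] [Fintype m] [DecidableEq m] (c : K) (A : Matrix m m K) :
    det (c • A⁻¹) = c ^ Fintype.card m / det A := by
  rw [det_smul, det_nonsing_inv, Ring.inverse_eq_inv, div_eq_mul_inv]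

end Matrix

def levelCoding (R : Type*) [Zero R] [One R] (m : ℕ) : Matrix (Fin (m + 1)) (Fin (m + 1)) R :=
  Matrix.of fun s t => if t = 0 ∨ s = t then 1 else 0

theorem det_levelCoding (R : Type*) [CommRing R] (m : ℕ) : (levelCoding R m).det = 1 := by
  rw [Matrix.det_of_isLowerTriangular]
  · simp [levelCoding]
  · intro s t (hst : s < t)
    simp [levelCoding, hst.ne, (hst.trans_le' (Fin.zero_le s)).ne']

section Coding

variable (J L : ℕ)

def idxStratum : Idx J L → Stratum J L
  | Sum.inl j => (j.succ, 0)
  | Sum.inr (Sum.inl l) => (0, l.succ)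
  | Sum.inr (Sum.inr q) => (q.1.succ, q.2.succ)

theorem idxStratum_injective : Function.Injective (idxStratum J L) := by
  rintro (j | l | q) (j' | l' | q') h <;>
    simp_all [idxStratum, Prod.ext_iff, Fin.succ_ne_zero, (Fin.succ_ne_zero _).symm]

theorem idxStratum_ne_zero (k : Idx J L) : idxStratum J L k ≠ 0 := by
  rcases k with j | l | q <;> simp [idxStratum, Prod.ext_iff, Fin.succ_ne_zero]

def cellCoding : Matrix (Stratum J L) (Stratum J L) ℝ :=
  levelCoding ℝ J ⊗ₖ levelCoding ℝ L

theorem det_cellCoding : (cellCoding J L).det = 1 := by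
  rw [cellCoding, Matrix.det_kronecker, det_levelCoding, det_levelCoding, one_pow, one_pow, one_mul]

theorem cellCoding_apply_zero (s : Stratum J L) : cellCoding J L s 0 = 1 := by
  simp [cellCoding, levelCoding]

theorem cellCoding_apply_idxStratum (s : Stratum J L) (k : Idx J L) :
    cellCoding J L s (idxStratum J L k) = dummy J L s k := by
  rw [cellCoding, Matrix.kronecker_apply]
  rcases k with j | l | q <;>
    simp only [levelCoding, idxStratum, dummy, Matrix.of_apply,
      Fin.ext_iff, Fin.val_succ, Fin.val_zero] <;> simp [← ite_and, and_comm]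

def colCell : Cols J L → Stratum J L × Bool
  | Sum.inl a => (0, decide (a = 0))
  | Sum.inr (Sum.inl k) => (idxStratum J L k, true)
  | Sum.inr (Sum.inr k) => (idxStratum J L k, false)

theorem colCell_injective : Function.Injective (colCell J L) := by
  rintro (a | k | k) (a' | k' | k') h <;>
    simp [colCell, idxStratum_ne_zero, eq_comm (a := (0 : Stratum J L))] at h
  · fin_cases a <;> fin_cases a' <;> simp_all
  all_goals rw [idxStratum_injective J L h]

theorem card_cols : Fintype.card (Cols J L) = 2 + 2 * (J + L + J * L) := by
  simp only [Fintype.card_sum, Fintype.card_prod, Fintype.card_fin]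
  ring

def colEquiv : Cols J L ≃ Stratum J L × Bool :=
  Equiv.ofBijective (colCell J L) <| (Fintype.bijective_iff_injective_and_card _).mpr
    ⟨colCell_injective J L, by
      simp only [card_cols, Fintype.card_prod, Fintype.card_fin, Fintype.card_bool]; ring⟩

end Coding

theorem designX_eq_submatrix (J L n : ℕ) (z : Fin n → Stratum J L) (δ : Fin n → Bool) :
    designX J L n z δ
      = (cellCoding J L ⊗ₖ (1 : Matrix Bool Bool ℝ)).submatrix (fun i => (z i, δ i))
          (colEquiv J L) := by
  ext i (a | k | k)
  all_goals
    simp only [designX, colEquiv, Equiv.ofBijective_apply, colCell, Matrix.submatrix_apply,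
      Matrix.kronecker_apply, Matrix.one_apply, Matrix.of_apply, cellCoding_apply_zero,
      cellCoding_apply_idxStratum]
    cases δ i <;> simp

section Counts

variable {J L n : ℕ} (z : Fin n → Stratum J L) (δ : Fin n → Bool) (s : Stratum J L)

theorem card_cell_true : #{i | (z i, δ i) = (s, true)} = strNA J L n z δ s := by
  simp only [strNA, Prod.mk.injEq]

theorem strNA_add_card_cell_false :
    strNA J L n z δ s + #{i | (z i, δ i) = (s, false)} = strN J L n z s := by
  rw [strN, ← Finset.card_filter_add_card_filter_not (s := {i | z i = s}) (fun i => δ i = true),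
    strNA, Finset.filter_filter, Finset.filter_filter]
  simp only [Prod.mk.injEq, Bool.not_eq_true]

end Counts

theorem det_designX_gram (J L n : ℕ) (z : Fin n → Stratum J L) (δ : Fin n → Bool) :
    ((designX J L n z δ)ᵀ * designX J L n z δ).det =
      ∏ s : Stratum J L,
        (strNA J L n z δ s : ℝ) * ((strN J L n z s : ℝ) - (strNA J L n z δ s : ℝ)) := by
  rw [designX_eq_submatrix, Matrix.det_transpose_submatrix_mul_submatrix, Matrix.det_kronecker,
    det_cellCoding, Matrix.det_one, one_pow, one_pow, one_mul, one_pow, one_mul,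
    Fintype.prod_prod_type]
  refine Finset.prod_congr rfl fun s _ => ?_
  have hfalse : (#{i | (z i, δ i) = (s, false)} : ℝ) = strN J L n z s - strNA J L n z δ s := by
    rw [← strNA_add_card_cell_false z δ s]; push_cast; ring
  rw [Fintype.prod_bool, card_cell_true, hfalse]

theorem C1_determinant_general (J L n : ℕ)
    (z : Fin n → Stratum J L) (δ : Fin n → Bool) :
    ((designX J L n z δ)ᵀ * designX J L n z δ).det =
        (∏ s : Stratum J L,
          (strNA J L n z δ s : ℝ) * ((strN J L n z s : ℝ) - (strNA J L n z δ s : ℝ))) ∧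
      ∀ σ : ℝ, 0 < σ →
        (σ ^ 2 • ((designX J L n z δ)ᵀ * designX J L n z δ)⁻¹).det =
          σ ^ (2 * (2 + 2 * (J + L + J * L))) /
            ∏ s : Stratum J L,
              (strNA J L n z δ s : ℝ) * ((strN J L n z s : ℝ) - (strNA J L n z δ s : ℝ)) := by
  refine ⟨det_designX_gram J L n z δ, fun σ _ => ?_⟩
  rw [det_smul_inv, det_designX_gram, card_cols, ← pow_mul]

/-- Criterion C1 (Proposition 3.1): `det(XᵗX) = ∏_{(j,l)} Ñ(j,l)(N(j,l)−Ñ(j,l))`; equivalently,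
`det(σ²(XᵗX)⁻¹) = σ^{2(2+2p)} / ∏_{(j,l)} Ñ(j,l)(N(j,l)−Ñ(j,l))` for every `σ > 0`. -/
theorem C1_determinant (J L n : ℕ) (hJ : 1 ≤ J) (hL : 1 ≤ L) (hn : 1 ≤ n)
    (z : Fin n → Stratum J L) (δ : Fin n → Bool)
    (hA : ∀ s : Stratum J L, 1 ≤ strNA J L n z δ s)
    (hB : ∀ s : Stratum J L, strNA J L n z δ s + 1 ≤ strN J L n z s) :
    ((designX J L n z δ)ᵀ * designX J L n z δ).det =
        (∏ s : Stratum J L,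
          (strNA J L n z δ s : ℝ) * ((strN J L n z s : ℝ) - (strNA J L n z δ s : ℝ))) ∧
      ∀ σ : ℝ, 0 < σ →
        (σ ^ 2 • ((designX J L n z δ)ᵀ * designX J L n z δ)⁻¹).det =
          σ ^ (2 * (2 + 2 * (J + L + J * L))) /
            ∏ s : Stratum J L,
              (strNA J L n z δ s : ℝ) * ((strN J L n z s : ℝ) - (strNA J L n z δ s : ℝ)) :=
  C1_determinant_general J L n z δ
end
end

section
/- Determinant of the treatment-A information block (Appendix, proof of Proposition 3.1): Under the stated hypothesis, the p×p matrix Ω_A = Σ_{i : δ_i = 1} f(z_i)·f(z_i)ᵗ satisfies det Ω_A = Π_{j=1}^{J} Ñ(j,0) · Π_{l=1}^{L} Ñ(0,l) · Π_{j=1}^{J} Π_{l=1}^{L} Ñ(j,l); in particular Ω_A is invertible. -/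
open Matrix Finset

noncomputable section

/-- The treatment-`A` information block `Ω_A = Σ_{i : δ_i = 1} f(z_i) f(z_i)ᵗ`. -/
def OmegaA (J L n : ℕ) (z : Fin n → Stratum J L) (δ : Fin n → Bool) :
    Matrix (Idx J L) (Idx J L) ℝ :=
  ∑ i : Fin n,
    if δ i then Matrix.vecMulVec (dummy J L (z i)) (dummy J L (z i)) else 0

/-- The vector `u = Σ_{i : δ_i = 1} f(z_i)`. -/
def uA (J L n : ℕ) (z : Fin n → Stratum J L) (δ : Fin n → Bool) : Idx J L → ℝ :=
  ∑ i : Fin n, if δ i then dummy J L (z i) else 0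

/-!
Grouping the treated patients by stratum gives `Ω_A = ∑ₛ Ñ(s) f(s) f(s)ᵀ`. The reference stratum
`(0, 0)` is coded by `0`, and the other strata are in bijection with the coordinates, so
`Ω_A = C · diag Ñ · Cᵀ` where the columns of `C` are their codings. Ordering the coordinates by
interaction order (main effects before interactions), `C` is block unitriangular, hence
`det C = 1` and `det Ω_A = ∏ Ñ`.
-/

theorem Matrix.mul_diagonal_mul_transpose_eq_sum {m ι R : Type*} [Fintype ι] [DecidableEq ι]
    [CommSemiring R] (C : Matrix m ι R) (w : ι → R) :
    C * diagonal w * Cᵀ = ∑ a, w a • vecMulVec (fun k => C k a) (fun k => C k a) := by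
  ext k k'
  rw [mul_apply, sum_apply]
  simp only [mul_diagonal, transpose_apply, smul_apply, vecMulVec_apply, smul_eq_mul]
  exact Finset.sum_congr rfl fun a _ => by ring

namespace DummyCoding

variable {J L : ℕ}

/-- The coordinates of the coding are in bijection with the strata other than the reference
stratum `(0, 0)`: coordinate `k` corresponds to the stratum whose coding has its
highest-order entry at `k`. -/
def stratumOf : Idx J L → Stratum J L
  | Sum.inl j => (j.succ, 0)
  | Sum.inr (Sum.inl l) => (0, l.succ)
  | Sum.inr (Sum.inr q) => (q.1.succ, q.2.succ)

theorem bijective_elim_stratumOf :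
    Function.Bijective fun o : Option (Idx J L) => o.elim (0, 0) stratumOf := by
  rw [Fintype.bijective_iff_injective_and_card]
  constructor
  · rintro (_ | j | l | q) (_ | j' | l' | q') h <;>
      simp_all [stratumOf, Prod.ext_iff, Fin.succ_ne_zero, (Fin.succ_ne_zero _).symm]
  · simp only [Fintype.card_option, Fintype.card_sum, Fintype.card_prod, Fintype.card_fin]
    ring

theorem sum_stratum {M : Type*} [AddCommMonoid M] (g : Stratum J L → M) :
    ∑ s, g s = g (0, 0) + ∑ k, g (stratumOf k) := by
  rw [← Fintype.sum_bijective _ bijective_elim_stratumOf (fun o => g (o.elim (0, 0) stratumOf))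
    g fun _ => rfl, Fintype.sum_option]
  rfl

theorem dummy_zero_zero : dummy J L (0, 0) = 0 := by
  funext k
  rcases k with j | l | q <;> simp [dummy]

def codingMatrix (J L : ℕ) : Matrix (Idx J L) (Idx J L) ℝ :=
  of fun k a => dummy J L (stratumOf a) k

def interactionOrder : Idx J L → ℕ
  | Sum.inr (Sum.inr _) => 1
  | _ => 0

theorem blockTriangular_codingMatrix : (codingMatrix J L).BlockTriangular interactionOrder := by
  rintro (j | l | q) (j' | l' | q') h <;>
    simp_all [interactionOrder, codingMatrix, stratumOf, dummy]

theorem codingMatrix_apply_of_interactionOrder_eq {k a : Idx J L}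
    (h : interactionOrder k = interactionOrder a) :
    codingMatrix J L k a = (1 : Matrix _ _ ℝ) k a := by
  rcases k with j | l | q <;> rcases a with j' | l' | q' <;>
    simp_all [interactionOrder, codingMatrix, stratumOf, dummy, one_apply, Fin.val_inj,
      Prod.ext_iff, eq_comm]

theorem det_codingMatrix : (codingMatrix J L).det = 1 := by
  rw [blockTriangular_codingMatrix.det]
  refine Finset.prod_eq_one fun o _ => ?_
  have hblock : (codingMatrix J L).toSquareBlock interactionOrder o = 1 := by
    ext ⟨k, hk⟩ ⟨a, ha⟩
    simpa [toSquareBlock, toSquareBlockProp, one_apply] using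
      codingMatrix_apply_of_interactionOrder_eq (hk.trans ha.symm)
  rw [hblock, det_one]

variable {n : ℕ} (z : Fin n → Stratum J L) (δ : Fin n → Bool)

theorem sum_ite_treated_eq_sum_strNA_smul {M : Type*} [AddCommMonoid M] (g : Stratum J L → M) :
    ∑ i, (if δ i then g (z i) else 0) = ∑ s, strNA J L n z δ s • g s := by
  simp_rw [strNA, ← Finset.sum_const, Finset.sum_filter]
  rw [Finset.sum_comm]
  refine Finset.sum_congr rfl fun i _ => ?_
  cases δ i <;> simp

theorem omegaA_eq_mul_diagonal_mul_transpose :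
    OmegaA J L n z δ = codingMatrix J L *
      diagonal (fun k => (strNA J L n z δ (stratumOf k) : ℝ)) * (codingMatrix J L)ᵀ := by
  rw [mul_diagonal_mul_transpose_eq_sum, OmegaA,
    sum_ite_treated_eq_sum_strNA_smul z δ fun s => vecMulVec (dummy J L s) (dummy J L s),
    sum_stratum, dummy_zero_zero]
  simp [codingMatrix, Nat.cast_smul_eq_nsmul]

theorem det_omegaA : (OmegaA J L n z δ).det = ∏ k, (strNA J L n z δ (stratumOf k) : ℝ) := by
  rw [omegaA_eq_mul_diagonal_mul_transpose, det_mul, det_mul, det_transpose, det_codingMatrix,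
    det_diagonal, one_mul, mul_one]

end DummyCoding

theorem detOmegaA_general (J L n : ℕ)
    (z : Fin n → Stratum J L) (δ : Fin n → Bool)
    (hA : ∀ s : Stratum J L, 1 ≤ strNA J L n z δ s) :
    (OmegaA J L n z δ).det =
        (∏ j : Fin J, (strNA J L n z δ (j.succ, 0) : ℝ)) *
          (∏ l : Fin L, (strNA J L n z δ (0, l.succ) : ℝ)) *
          ∏ j : Fin J, ∏ l : Fin L, (strNA J L n z δ (j.succ, l.succ) : ℝ) ∧
      IsUnit (OmegaA J L n z δ) := by
  refine ⟨?_, ?_⟩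
  · rw [DummyCoding.det_omegaA, Fintype.prod_sum_type, Fintype.prod_sum_type, ← mul_assoc,
      Fintype.prod_prod_type]
    rfl
  · rw [isUnit_iff_isUnit_det, DummyCoding.det_omegaA, isUnit_iff_ne_zero]
    exact Finset.prod_ne_zero_iff.mpr fun k _ =>
      Nat.cast_ne_zero.mpr (Nat.one_le_iff_ne_zero.mp (hA _))

/-- Determinant of the treatment-`A` information block (Appendix, proof of Proposition 3.1):
`det Ω_A = ∏_j Ñ(j,0) · ∏_l Ñ(0,l) · ∏_{j,l} Ñ(j,l)`; in particular `Ω_A` is invertible. -/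
theorem detOmegaA (J L n : ℕ) (hJ : 1 ≤ J) (hL : 1 ≤ L) (hn : 1 ≤ n)
    (z : Fin n → Stratum J L) (δ : Fin n → Bool)
    (hA : ∀ s : Stratum J L, 1 ≤ strNA J L n z δ s) :
    (OmegaA J L n z δ).det =
        (∏ j : Fin J, (strNA J L n z δ (j.succ, 0) : ℝ)) *
          (∏ l : Fin L, (strNA J L n z δ (0, l.succ) : ℝ)) *
          ∏ j : Fin J, ∏ l : Fin L, (strNA J L n z δ (j.succ, l.succ) : ℝ) ∧
      IsUnit (OmegaA J L n z δ) :=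
  detOmegaA_general J L n z δ hA
end
end

section
/- Vector identity for the inverse information block (Appendix, proof of Proposition 3.1): Under the stated hypothesis, with Ω_A = Σ_{i : δ_i = 1} f(z_i)·f(z_i)ᵗ and u = Σ_{i : δ_i = 1} f(z_i) ∈ ℝ^p, the vector Ω_A⁻¹·u has all of its first J + L coordinates (the main-effect coordinates) equal to 1 and all of its last J·L coordinates (the interaction coordinates) equal to −1. -/
open Matrix Finset

noncomputable section

/-!
Let `x` be the vector with entries `1` on the main-effect coordinates and `-1` on the interaction
coordinates. For every stratum `s ≠ (0,0)` exactly one of three patterns occurs: one main effect,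
the other main effect, or both main effects together with their interaction; in each case
`f(s) ⬝ x = 1`, while `f(0,0) = 0`. Hence `f(s) f(s)ᵗ x = f(s)` for all `s`, and summing over the
treated patients gives `Ω_A x = u`. Since `vᵗ Ω_A v = Σ (f(z_i) ⬝ v)²` and every stratum is
represented among the treated patients, `Ω_A v = 0` forces `f(s) ⬝ v = 0` for all `s`, which
pins down `v = 0` coordinate by coordinate; so `Ω_A` is invertible and `Ω_A⁻¹ u = x`.
-/

section Gram

variable {ι n R : Type*} [Fintype n]

theorem sum_vecMulVec_self_mulVec [CommSemiring R] (s : Finset ι) (g : ι → n → R) (v : n → R) :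
    (∑ i ∈ s, vecMulVec (g i) (g i)) *ᵥ v = ∑ i ∈ s, (g i ⬝ᵥ v) • g i := by
  simp only [sum_mulVec, vecMulVec_mulVec, op_smul_eq_smul]

theorem dotProduct_eq_zero_of_sum_vecMulVec_self_mulVec_eq_zero [CommRing R] [LinearOrder R]
    [IsStrictOrderedRing R] {s : Finset ι} {g : ι → n → R} {v : n → R}
    (h : (∑ i ∈ s, vecMulVec (g i) (g i)) *ᵥ v = 0) : ∀ i ∈ s, g i ⬝ᵥ v = 0 := by
  have hsq : ∑ i ∈ s, (g i ⬝ᵥ v) ^ 2 = 0 := by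
    calc ∑ i ∈ s, (g i ⬝ᵥ v) ^ 2 = (∑ i ∈ s, (g i ⬝ᵥ v) • g i) ⬝ᵥ v := by
          simp only [sum_dotProduct, smul_dotProduct, smul_eq_mul, sq]
      _ = 0 := by rw [← sum_vecMulVec_self_mulVec, h, zero_dotProduct]
  intro i hi
  exact pow_eq_zero_iff two_ne_zero |>.mp <|
    (sum_eq_zero_iff_of_nonneg fun i _ => sq_nonneg _).mp hsq i hi

end Gram

section DummyCoding

variable {J L : ℕ}

def effectSigns (J L : ℕ) : Idx J L → ℝ :=
  Sum.elim 1 (Sum.elim 1 (-1))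

theorem dummy_zero_zero : dummy J L (0, 0) = 0 := by
  funext k
  rcases k with j | l | q <;> simp [dummy]

theorem dummy_succ_zero_dotProduct (j : Fin J) (v : Idx J L → ℝ) :
    dummy J L (j.succ, 0) ⬝ᵥ v = v (Sum.inl j) := by
  simp [dotProduct, Fintype.sum_sum_type, dummy, Fin.val_inj]

theorem dummy_zero_succ_dotProduct (l : Fin L) (v : Idx J L → ℝ) :
    dummy J L (0, l.succ) ⬝ᵥ v = v (Sum.inr (Sum.inl l)) := by
  simp [dotProduct, Fintype.sum_sum_type, dummy, Fin.val_inj]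

theorem dummy_succ_succ_dotProduct (j : Fin J) (l : Fin L) (v : Idx J L → ℝ) :
    dummy J L (j.succ, l.succ) ⬝ᵥ v =
      v (Sum.inl j) + v (Sum.inr (Sum.inl l)) + v (Sum.inr (Sum.inr (j, l))) := by
  simp [dotProduct, Fintype.sum_sum_type, Fintype.sum_prod_type, dummy, Fin.val_inj, ite_and,
    add_assoc]

theorem dummy_dotProduct_effectSigns_smul (s : Stratum J L) :
    (dummy J L s ⬝ᵥ effectSigns J L) • dummy J L s = dummy J L s := by
  obtain ⟨a, b⟩ := s
  cases a using Fin.cases <;> cases b using Fin.cases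
  · simp [dummy_zero_zero]
  · simp [dummy_zero_succ_dotProduct, effectSigns]
  · simp [dummy_succ_zero_dotProduct, effectSigns]
  · simp [dummy_succ_succ_dotProduct, effectSigns]

theorem eq_zero_of_forall_dummy_dotProduct_eq_zero {v : Idx J L → ℝ}
    (h : ∀ s, dummy J L s ⬝ᵥ v = 0) : v = 0 := by
  have hmainJ (j : Fin J) : v (Sum.inl j) = 0 := by
    simpa [dummy_succ_zero_dotProduct] using h (j.succ, 0)
  have hmainL (l : Fin L) : v (Sum.inr (Sum.inl l)) = 0 := by
    simpa [dummy_zero_succ_dotProduct] using h (0, l.succ)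
  funext k
  rcases k with j | l | ⟨j, l⟩
  · exact hmainJ j
  · exact hmainL l
  · simpa [dummy_succ_succ_dotProduct, hmainJ, hmainL] using h (j.succ, l.succ)

end DummyCoding

section Design

variable {J L n : ℕ} (z : Fin n → Stratum J L) (δ : Fin n → Bool)

theorem OmegaA_eq_sum_treated :
    OmegaA J L n z δ = ∑ i with δ i, vecMulVec (dummy J L (z i)) (dummy J L (z i)) := by
  rw [OmegaA, sum_filter]

theorem uA_eq_sum_treated : uA J L n z δ = ∑ i with δ i, dummy J L (z i) := by
  rw [uA, sum_filter]

theorem OmegaA_mulVec_effectSigns : OmegaA J L n z δ *ᵥ effectSigns J L = uA J L n z δ := by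
  simp only [OmegaA_eq_sum_treated, uA_eq_sum_treated, sum_vecMulVec_self_mulVec,
    dummy_dotProduct_effectSigns_smul]

variable {z δ} in
theorem det_OmegaA_ne_zero (hA : ∀ s : Stratum J L, 1 ≤ strNA J L n z δ s) :
    (OmegaA J L n z δ).det ≠ 0 := by
  rw [Ne, ← exists_mulVec_eq_zero_iff]
  rintro ⟨v, hv, hΩv⟩
  rw [OmegaA_eq_sum_treated] at hΩv
  refine hv (eq_zero_of_forall_dummy_dotProduct_eq_zero fun s => ?_)
  obtain ⟨i, hi⟩ := card_pos.mp (hA s)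
  obtain ⟨-, rfl, hδi⟩ := mem_filter.mp hi
  exact dotProduct_eq_zero_of_sum_vecMulVec_self_mulVec_eq_zero hΩv i
    (mem_filter.mpr ⟨mem_univ i, hδi⟩)

end Design

theorem OmegaA_inv_mulVec_uA_general (J L n : ℕ)
    (z : Fin n → Stratum J L) (δ : Fin n → Bool)
    (hA : ∀ s : Stratum J L, 1 ≤ strNA J L n z δ s) :
    (∀ j : Fin J, ((OmegaA J L n z δ)⁻¹ *ᵥ uA J L n z δ) (Sum.inl j) = 1) ∧
      (∀ l : Fin L, ((OmegaA J L n z δ)⁻¹ *ᵥ uA J L n z δ) (Sum.inr (Sum.inl l)) = 1) ∧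
      ∀ q : Fin J × Fin L,
        ((OmegaA J L n z δ)⁻¹ *ᵥ uA J L n z δ) (Sum.inr (Sum.inr q)) = -1 := by
  have hunit : IsUnit (OmegaA J L n z δ).det := isUnit_iff_ne_zero.mpr (det_OmegaA_ne_zero hA)
  have hsolve : (OmegaA J L n z δ)⁻¹ *ᵥ uA J L n z δ = effectSigns J L := by
    rw [← OmegaA_mulVec_effectSigns, mulVec_mulVec, nonsing_inv_mul _ hunit, one_mulVec]
  rw [hsolve]
  exact ⟨fun _ => rfl, fun _ => rfl, fun _ => rfl⟩

/-- Vector identity (Appendix, proof of Proposition 3.1): the main-effect coordinates of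
`Ω_A⁻¹ u` all equal `1` and its interaction coordinates all equal `−1`. -/
theorem OmegaA_inv_mulVec_uA (J L n : ℕ) (hJ : 1 ≤ J) (hL : 1 ≤ L) (hn : 1 ≤ n)
    (z : Fin n → Stratum J L) (δ : Fin n → Bool)
    (hA : ∀ s : Stratum J L, 1 ≤ strNA J L n z δ s) :
    (∀ j : Fin J, ((OmegaA J L n z δ)⁻¹ *ᵥ uA J L n z δ) (Sum.inl j) = 1) ∧
      (∀ l : Fin L, ((OmegaA J L n z δ)⁻¹ *ᵥ uA J L n z δ) (Sum.inr (Sum.inl l)) = 1) ∧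
      ∀ q : Fin J × Fin L,
        ((OmegaA J L n z δ)⁻¹ *ᵥ uA J L n z δ) (Sum.inr (Sum.inr q)) = -1 :=
  OmegaA_inv_mulVec_uA_general J L n z δ hA
end
end

section
/- Theorem 5.1: For every ethical weight ω ∈ [0,1), the compound criterion Ψ_ω is a strictly convex function on (0,1)^S and there exists a unique allocation π* ∈ (0,1)^S minimizing Ψ_ω; moreover, when ω > 0, π* is the unique point of (0,1)^S satisfying, for every s ∈ S, the stationarity equation Φ_E(π*)² · ∂Φ_I/∂π(s)(π*) = (ω/(1−ω)) · Φ_E* · Φ_I* · θ(s) · p(s), where ∂Φ_I/∂π(s)(π) = Φ_I(π)·(2π(s)−1)/(π(s)(1−π(s))). -/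
open Finset

noncomputable section

/-- The ethical criterion `Φ_E(π) = Σ_s p(s)·c_s(π(s))`, where `c_s(x) = θ(s)·x` if
`θ(s) > 0`, `c_s(x) = −θ(s)·(1−x)` if `θ(s) < 0`, and `c_s(x) = 0` if `θ(s) = 0`. -/
def PhiE (S : Type*) [Fintype S] (θ p : S → ℝ) (π : S → ℝ) : ℝ :=
  ∑ s : S, p s *
    (if 0 < θ s then θ s * π s else if θ s < 0 then -θ s * (1 - π s) else 0)

/-- The supremum `Φ_E* = Σ_s p(s)·|θ(s)|` of the ethical criterion. -/
def PhiEstar (S : Type*) [Fintype S] (θ p : S → ℝ) : ℝ :=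
  ∑ s : S, p s * |θ s|

/-- The D-optimality inferential criterion `Φ_I(π) = ∏_s (π(s)(1−π(s)))⁻¹`. -/
def PhiI (S : Type*) [Fintype S] (π : S → ℝ) : ℝ :=
  ∏ s : S, (π s * (1 - π s))⁻¹

/-- The minimum `Φ_I* = 4^K` of the inferential criterion over `(0,1)^S`. -/
def PhiIstar (S : Type*) [Fintype S] : ℝ :=
  4 ^ Fintype.card S

/-- The open box `(0,1)^S` of admissible allocations. -/
def Dset (S : Type*) : Set (S → ℝ) :=
  Set.univ.pi fun _ : S => Set.Ioo (0 : ℝ) 1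

/-- The compound criterion `Ψ_ω(π) = ω·Φ_E*/Φ_E(π) + (1−ω)·Φ_I(π)/Φ_I*`. -/
def Psi (S : Type*) [Fintype S] (ω : ℝ) (θ p : S → ℝ) (π : S → ℝ) : ℝ :=
  ω * PhiEstar S θ p / PhiE S θ p π + (1 - ω) * PhiI S π / PhiIstar S

/-- `π` is the optimal compound target `π*_ω(θ,p)`: it minimizes `Ψ_ω` over `(0,1)^S`.
(By the paper's Theorem 5.1 this minimizer exists and is unique.) -/
def IsCompoundTarget (S : Type*) [Fintype S] (ω : ℝ) (θ p : S → ℝ) (π : S → ℝ) : Prop :=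
  π ∈ Dset S ∧ ∀ π' ∈ Dset S, Psi S ω θ p π ≤ Psi S ω θ p π'

/-!
Write `Φ_I(π) = exp (∑ₛ b (π s))` with the barrier `b x = -log x - log (1 - x)`, strictly convex
on `(0,1)`; hence `Φ_I` is strictly convex. `Φ_E` is affine and positive on the box, so `Φ_E*/Φ_E`
is convex, and `Ψ_ω` is strictly convex, which gives uniqueness of the minimizer. Since
`Φ_I(π) ≥ (π s (1 - π s))⁻¹` for every `s`, `Ψ_ω` exceeds `Ψ_ω(1/2)` outside a compact sub-box
`[a, 1 - a]^S`, which gives existence. Finally, a differentiable convex function on an open set is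
minimal exactly where its derivative vanishes, and the coordinates of the gradient of `Ψ_ω`,
multiplied by `Φ_I* Φ_E² / (1 - ω)`, are the stationarity equations.
-/

open Set

section General

theorem StrictConvexOn.sum_pi {ι : Type*} [Fintype ι] {t : ι → Set ℝ} {f : ι → ℝ → ℝ}
    (hf : ∀ i, StrictConvexOn ℝ (t i) (f i)) :
    StrictConvexOn ℝ (univ.pi t) fun x => ∑ i, f i (x i) := by
  refine ⟨convex_pi fun i _ => (hf i).1, fun x hx y hy hxy a b ha hb hab => ?_⟩
  rw [mem_univ_pi] at hx hy
  obtain ⟨j, hj⟩ := Function.ne_iff.mp hxy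
  simp only [Pi.add_apply, Pi.smul_apply, smul_eq_mul, Finset.mul_sum, ← Finset.sum_add_distrib]
  refine Finset.sum_lt_sum (fun i _ => ?_) ⟨j, Finset.mem_univ j, ?_⟩
  · simpa using (hf i).convexOn.2 (hx i) (hy i) ha.le hb.le hab
  · simpa using (hf j).2 (hx j) (hy j) hj ha hb hab

theorem StrictConvexOn.exp {E : Type*} [AddCommGroup E] [Module ℝ E] {s : Set E} {f : E → ℝ}
    (hf : StrictConvexOn ℝ s f) : StrictConvexOn ℝ s fun x => Real.exp (f x) :=
  ⟨hf.1, fun _ hx _ hy hxy _ _ ha hb hab =>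
    (Real.exp_lt_exp.2 (hf.2 hx hy hxy ha hb hab)).trans_le
      (convexOn_exp.2 trivial trivial ha.le hb.le hab)⟩

theorem StrictConvexOn.const_mul {E : Type*} [AddCommGroup E] [Module ℝ E] {s : Set E}
    {f : E → ℝ} {c : ℝ} (hc : 0 < c) (hf : StrictConvexOn ℝ s f) :
    StrictConvexOn ℝ s fun x => c * f x :=
  ⟨hf.1, fun _ hx _ hy hxy _ _ ha hb hab => by
    have := mul_lt_mul_of_pos_left (hf.2 hx hy hxy ha hb hab) hc
    simp only [smul_eq_mul] at this ⊢
    linarith⟩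

theorem ConvexOn.isMinOn_of_hasFDerivAt_eq_zero {E : Type*} [NormedAddCommGroup E]
    [NormedSpace ℝ E] {s : Set E} {f : E → ℝ} {x : E} (hf : ConvexOn ℝ s f) (hx : x ∈ s)
    (hfx : HasFDerivAt f (0 : E →L[ℝ] ℝ) x) : IsMinOn f s x := by
  intro y hy
  let g : ℝ → ℝ := fun t => f (AffineMap.lineMap x y t)
  have hg : ConvexOn ℝ (Icc 0 1) g :=
    (hf.comp_affineMap (AffineMap.lineMap x y)).subset
      (fun t ht => hf.1.lineMap_mem hx hy ht) (convex_Icc 0 1)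
  have hg' : HasDerivAt g 0 0 := by
    have hline : HasDerivAt (fun t : ℝ => AffineMap.lineMap x y t) (y - x) 0 := by
      simpa [AffineMap.lineMap_apply_module'] using
        ((hasDerivAt_id (0 : ℝ)).smul_const (y - x)).add_const x
    simpa using (AffineMap.lineMap_apply_zero x y (k := ℝ) ▸ hfx).comp_hasDerivAt (0 : ℝ) hline
  have := hg.le_slope_of_hasDerivAt (left_mem_Icc.2 zero_le_one) (right_mem_Icc.2 zero_le_one)
    zero_lt_one hg'
  simpa [slope_def_field, g] using this

theorem ConvexOn.isMinOn_iff_hasFDerivAt_eq_zero {E : Type*} [NormedAddCommGroup E]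
    [NormedSpace ℝ E] {s : Set E} {f : E → ℝ} {f' : E →L[ℝ] ℝ} {x : E} (hf : ConvexOn ℝ s f)
    (hs : IsOpen s) (hx : x ∈ s) (hfx : HasFDerivAt f f' x) : IsMinOn f s x ↔ f' = 0 :=
  ⟨fun hmin => (hmin.isLocalMin (hs.mem_nhds hx)).hasFDerivAt_eq_zero hfx,
    fun h => hf.isMinOn_of_hasFDerivAt_eq_zero hx (h ▸ hfx)⟩

theorem exists_isMinOn_of_isCompact {X : Type*} [TopologicalSpace X] {s K : Set X} {f : X → ℝ}
    {x₀ : X} (hK : IsCompact K) (hKs : K ⊆ s) (hf : ContinuousOn f K) (hx₀ : x₀ ∈ K)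
    (hout : ∀ x ∈ s \ K, f x₀ ≤ f x) : ∃ x ∈ s, IsMinOn f s x := by
  obtain ⟨x, hxK, hmin⟩ := hK.exists_isMinOn ⟨x₀, hx₀⟩ hf
  refine ⟨x, hKs hxK, fun y hy => ?_⟩
  by_cases hyK : y ∈ K
  · exact hmin hyK
  · exact (hmin hx₀).trans (hout y ⟨hy, hyK⟩)

def dotCLM {ι : Type*} [Fintype ι] (g : ι → ℝ) : (ι → ℝ) →L[ℝ] ℝ :=
  ∑ i, g i • ContinuousLinearMap.proj i

theorem dotCLM_apply {ι : Type*} [Fintype ι] (g v : ι → ℝ) : dotCLM g v = ∑ i, g i * v i := by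
  simp [dotCLM]

theorem dotCLM_eq_zero_iff {ι : Type*} [Fintype ι] (g : ι → ℝ) : dotCLM g = 0 ↔ g = 0 := by
  classical
  refine ⟨fun h => funext fun i => ?_, fun h => by simp [dotCLM, h]⟩
  simpa [dotCLM_apply, Pi.single_apply] using DFunLike.congr_fun h (Pi.single i 1)

end General

section Barrier

open Real

def barrier (x : ℝ) : ℝ := -(log x + log (1 - x))

theorem exp_barrier {x : ℝ} (hx : x ∈ Ioo (0 : ℝ) 1) : exp (barrier x) = (x * (1 - x))⁻¹ := by
  rw [barrier, exp_neg, exp_add, exp_log hx.1, exp_log (sub_pos.2 hx.2)]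

theorem barrier_nonneg {x : ℝ} (hx : x ∈ Ioo (0 : ℝ) 1) : 0 ≤ barrier x := by
  have h1 := log_nonpos hx.1.le hx.2.le
  have h2 := log_nonpos (sub_pos.2 hx.2).le (by linarith [hx.1])
  rw [barrier]; linarith

theorem strictConvexOn_barrier : StrictConvexOn ℝ (Ioo 0 1) barrier := by
  have hlog : StrictConvexOn ℝ (Ioi 0) fun x => -log x := strictConcaveOn_log_Ioi.neg
  have hlog_refl : ConvexOn ℝ (Iio 1) fun x => -log (1 - x) := by
    have := hlog.convexOn.comp_affineMap (AffineMap.lineMap (1 : ℝ) 0)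
    refine (this.subset (fun x hx => ?_) (convex_Iio 1)).congr fun x _ => ?_
    · simp [AffineMap.lineMap_apply_ring] at hx ⊢
      linarith
    · simp [AffineMap.lineMap_apply_ring]
  exact ((hlog.subset Ioo_subset_Ioi_self (convex_Ioo 0 1)).add_convexOn
    (hlog_refl.subset Ioo_subset_Iio_self (convex_Ioo 0 1))).congr fun x _ => by
      simp only [barrier, Pi.add_apply]; ring

theorem hasDerivAt_barrier {x : ℝ} (hx : x ∈ Ioo (0 : ℝ) 1) :
    HasDerivAt barrier ((2 * x - 1) / (x * (1 - x))) x := by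
  have h1 : x ≠ 0 := hx.1.ne'
  have h2 : 1 - x ≠ 0 := (sub_pos.2 hx.2).ne'
  have := ((hasDerivAt_log h1).add ((hasDerivAt_log h2).comp x
    ((hasDerivAt_const x 1).sub (hasDerivAt_id x)))).neg
  refine this.congr_deriv ?_
  field_simp
  ring

end Barrier

section Criteria

variable {S : Type*} [Fintype S]

theorem isOpen_Dset : IsOpen (Dset S) :=
  isOpen_set_pi finite_univ fun _ _ => isOpen_Ioo

omit [Fintype S] in
theorem convex_Dset : Convex ℝ (Dset S) :=
  convex_pi fun _ _ => convex_Ioo 0 1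

theorem phiI_eq_exp_sum_barrier {π : S → ℝ} (hπ : π ∈ Dset S) :
    PhiI S π = Real.exp (∑ s, barrier (π s)) := by
  rw [Real.exp_sum]
  exact Finset.prod_congr rfl fun s _ => (exp_barrier (hπ s trivial)).symm

theorem phiI_pos {π : S → ℝ} (hπ : π ∈ Dset S) : 0 < PhiI S π :=
  phiI_eq_exp_sum_barrier hπ ▸ Real.exp_pos _

theorem inv_le_phiI {π : S → ℝ} (hπ : π ∈ Dset S) (s : S) : (π s * (1 - π s))⁻¹ ≤ PhiI S π := by
  rw [phiI_eq_exp_sum_barrier hπ, ← exp_barrier (hπ s trivial), Real.exp_le_exp]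
  exact Finset.single_le_sum (fun t _ => barrier_nonneg (hπ t trivial)) (Finset.mem_univ s)

theorem strictConvexOn_phiI : StrictConvexOn ℝ (Dset S) (PhiI S) := by
  refine (StrictConvexOn.sum_pi fun _ : S => strictConvexOn_barrier).exp.congr fun π hπ => ?_
  exact (phiI_eq_exp_sum_barrier hπ).symm

theorem hasFDerivAt_phiI {π : S → ℝ} (hπ : π ∈ Dset S) :
    HasFDerivAt (PhiI S) (PhiI S π • dotCLM fun s => (2 * π s - 1) / (π s * (1 - π s))) π := by
  have hsum : HasFDerivAt (fun π : S → ℝ => ∑ s, barrier (π s))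
      (dotCLM fun s => (2 * π s - 1) / (π s * (1 - π s))) π :=
    HasFDerivAt.fun_sum fun s _ =>
      (hasDerivAt_barrier (hπ s trivial)).comp_hasFDerivAt (f := fun π : S → ℝ => π s) π
        (hasFDerivAt_apply s π)
  rw [phiI_eq_exp_sum_barrier hπ]
  refine hsum.exp.congr_of_eventuallyEq ?_
  filter_upwards [isOpen_Dset.mem_nhds hπ] with π' hπ' using phiI_eq_exp_sum_barrier hπ'

end Criteria

section Compound

variable {S : Type*} [Fintype S] {θ p : S → ℝ}

theorem phiE_eq_dotCLM_add (θ p π : S → ℝ) :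
    PhiE S θ p π = dotCLM (fun s => p s * θ s) π + PhiE S θ p 0 := by
  simp only [PhiE, dotCLM_apply, Pi.zero_apply, ← Finset.sum_add_distrib]
  refine Finset.sum_congr rfl fun s _ => ?_
  split_ifs with hpos hneg
  · ring
  · ring
  · simp [le_antisymm (not_lt.1 hpos) (not_lt.1 hneg)]

theorem hasFDerivAt_phiE (θ p π : S → ℝ) :
    HasFDerivAt (PhiE S θ p) (dotCLM fun s => p s * θ s) π := by
  rw [funext (phiE_eq_dotCLM_add θ p)]
  exact (dotCLM _).hasFDerivAt.add_const _

theorem phiE_pos (hp : ∀ s, 0 < p s) (hθ : ∃ s, θ s ≠ 0) {π : S → ℝ} (hπ : π ∈ Dset S) :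
    0 < PhiE S θ p π := by
  obtain ⟨t, ht⟩ := hθ
  have term_pos : ∀ s, θ s ≠ 0 →
      0 < if 0 < θ s then θ s * π s else if θ s < 0 then -θ s * (1 - π s) else 0 := by
    intro s hs
    have h01 := hπ s trivial
    rcases hs.lt_or_gt with h | h
    · simpa [h.not_gt, h] using mul_neg_of_neg_of_pos h (sub_pos.2 h01.2)
    · simp [h, mul_pos h h01.1]
  refine Finset.sum_pos' (fun s _ => mul_nonneg (hp s).le ?_)
    ⟨t, Finset.mem_univ t, mul_pos (hp t) (term_pos t ht)⟩
  by_cases hs : θ s = 0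
  · simp [hs]
  · exact (term_pos s hs).le

theorem phiEstar_pos (hp : ∀ s, 0 < p s) (hθ : ∃ s, θ s ≠ 0) : 0 < PhiEstar S θ p := by
  obtain ⟨t, ht⟩ := hθ
  exact Finset.sum_pos' (fun s _ => mul_nonneg (hp s).le (abs_nonneg _))
    ⟨t, Finset.mem_univ t, mul_pos (hp t) (abs_pos.2 ht)⟩

theorem phiIstar_pos : 0 < PhiIstar S := by
  unfold PhiIstar; positivity

theorem convexOn_mul_inv_phiE (hp : ∀ s, 0 < p s) (hθ : ∃ s, θ s ≠ 0) {c : ℝ} (hc : 0 ≤ c) :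
    ConvexOn ℝ (Dset S) fun π => c * (PhiE S θ p π)⁻¹ := by
  let A : (S → ℝ) →ᵃ[ℝ] ℝ :=
    (dotCLM fun s => p s * θ s).toLinearMap.toAffineMap + AffineMap.const ℝ _ (PhiE S θ p 0)
  have hA : ∀ π, A π = PhiE S θ p π := fun π => (phiE_eq_dotCLM_add θ p π).symm
  refine ((((convexOn_zpow (-1)).smul hc).comp_affineMap A).subset (fun π hπ => ?_)
    convex_Dset).congr fun π _ => ?_
  · simpa [hA] using phiE_pos hp hθ hπ
  · simp [hA]

theorem psi_eq (ω : ℝ) (θ p : S → ℝ) : Psi S ω θ p = fun π =>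
    ω * PhiEstar S θ p * (PhiE S θ p π)⁻¹ + (1 - ω) / PhiIstar S * PhiI S π := by
  funext π
  rw [Psi]
  ring

theorem strictConvexOn_psi (hp : ∀ s, 0 < p s) (hθ : ∃ s, θ s ≠ 0) {ω : ℝ} (hω0 : 0 ≤ ω)
    (hω1 : ω < 1) : StrictConvexOn ℝ (Dset S) (Psi S ω θ p) := by
  rw [psi_eq]
  have hE := convexOn_mul_inv_phiE hp hθ (mul_nonneg hω0 (phiEstar_pos hp hθ).le)
  exact hE.add_strictConvexOn (strictConvexOn_phiI.const_mul (div_pos (sub_pos.2 hω1) phiIstar_pos))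

def psiGrad (ω : ℝ) (θ p π : S → ℝ) (s : S) : ℝ :=
  -(ω * PhiEstar S θ p) / PhiE S θ p π ^ 2 * (p s * θ s) +
    (1 - ω) / PhiIstar S * (PhiI S π * (2 * π s - 1) / (π s * (1 - π s)))

theorem hasFDerivAt_psi (hp : ∀ s, 0 < p s) (hθ : ∃ s, θ s ≠ 0) (ω : ℝ) {π : S → ℝ}
    (hπ : π ∈ Dset S) : HasFDerivAt (Psi S ω θ p) (dotCLM (psiGrad ω θ p π)) π := by
  have hE := (hasDerivAt_inv (phiE_pos hp hθ hπ).ne').comp_hasFDerivAt π (hasFDerivAt_phiE θ p π)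
  rw [psi_eq]
  refine ((hE.const_mul _).add ((hasFDerivAt_phiI hπ).const_mul _)).congr_fderiv ?_
  ext v
  simp only [add_apply, smul_apply, smul_eq_mul, dotCLM_apply, psiGrad, Finset.mul_sum,
    ← Finset.sum_add_distrib]
  refine Finset.sum_congr rfl fun s _ => ?_
  ring

theorem psiGrad_eq_zero_iff (hp : ∀ s, 0 < p s) (hθ : ∃ s, θ s ≠ 0) {ω : ℝ} (hω1 : ω < 1)
    {π : S → ℝ} (hπ : π ∈ Dset S) (s : S) :
    psiGrad ω θ p π s = 0 ↔
      PhiE S θ p π ^ 2 * (PhiI S π * (2 * π s - 1) / (π s * (1 - π s))) =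
        ω / (1 - ω) * PhiEstar S θ p * PhiIstar S * (θ s * p s) := by
  have hE := (phiE_pos hp hθ hπ).ne'
  have hI := (phiIstar_pos (S := S)).ne'
  have hω := (sub_pos.2 hω1).ne'
  have hgrad : psiGrad ω θ p π s = (1 - ω) / (PhiIstar S * PhiE S θ p π ^ 2) *
      (PhiE S θ p π ^ 2 * (PhiI S π * (2 * π s - 1) / (π s * (1 - π s))) -
        ω / (1 - ω) * PhiEstar S θ p * PhiIstar S * (θ s * p s)) := by
    unfold psiGrad
    field_simp
    ring
  rw [hgrad, mul_eq_zero, sub_eq_zero]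
  simp [hE, hI, hω]

theorem mul_phiI_le_psi (hp : ∀ s, 0 < p s) (hθ : ∃ s, θ s ≠ 0) {ω : ℝ} (hω0 : 0 ≤ ω)
    {π : S → ℝ} (hπ : π ∈ Dset S) : (1 - ω) / PhiIstar S * PhiI S π ≤ Psi S ω θ p π := by
  rw [psi_eq]
  exact le_add_of_nonneg_left
    (mul_nonneg (mul_nonneg hω0 (phiEstar_pos hp hθ).le) (inv_nonneg.2 (phiE_pos hp hθ hπ).le))

theorem exists_isMinOn_psi (hp : ∀ s, 0 < p s) (hθ : ∃ s, θ s ≠ 0) {ω : ℝ} (hω0 : 0 ≤ ω)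
    (hω1 : ω < 1) : ∃ π ∈ Dset S, IsMinOn (Psi S ω θ p) (Dset S) π := by
  set c := (1 - ω) / PhiIstar S
  have hc : 0 < c := div_pos (sub_pos.2 hω1) phiIstar_pos
  have hhalf : (fun _ => 1 / 2 : S → ℝ) ∈ Dset S := fun _ _ => by norm_num
  set B := Psi S ω θ p fun _ => 1 / 2
  have hB : 0 < B := (mul_pos hc (phiI_pos hhalf)).trans_le (mul_phiI_le_psi hp hθ hω0 hhalf)
  set a := min (1 / 4) (c / B)
  have ha : 0 < a := lt_min (by norm_num) (div_pos hc hB)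
  have ha4 : a ≤ 1 / 4 := min_le_left _ _
  have hKD : univ.pi (fun _ : S => Icc a (1 - a)) ⊆ Dset S := fun π hπ s _ =>
    ⟨ha.trans_le (hπ s trivial).1, (hπ s trivial).2.trans_lt (by linarith)⟩
  refine exists_isMinOn_of_isCompact (isCompact_univ_pi fun _ => isCompact_Icc) hKD
    (fun π hπ => (hasFDerivAt_psi hp hθ ω (hKD hπ)).continuousAt.continuousWithinAt)
    (x₀ := fun _ => 1 / 2) (fun _ _ => ⟨by linarith, by linarith⟩) fun π ⟨hπ, hπK⟩ => ?_
  obtain ⟨s, hs⟩ : ∃ s, π s ∉ Icc a (1 - a) := by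
    by_contra! h
    exact hπK fun s _ => h s
  have h01 := hπ s trivial
  have hfac : π s * (1 - π s) ≤ a := by
    rw [Set.mem_Icc, not_and_or, not_le, not_le] at hs
    rcases hs with h | h <;> nlinarith [h01.1, h01.2]
  have haB : a * B ≤ c := (le_div_iff₀ hB).1 (min_le_right _ _)
  calc B ≤ c / a := (le_div_iff₀ ha).2 (by linarith)
    _ ≤ c / (π s * (1 - π s)) :=
      div_le_div_of_nonneg_left hc.le (mul_pos h01.1 (sub_pos.2 h01.2)) hfac
    _ = c * (π s * (1 - π s))⁻¹ := div_eq_mul_inv _ _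
    _ ≤ c * PhiI S π := mul_le_mul_of_nonneg_left (inv_le_phiI hπ s) hc.le
    _ ≤ Psi S ω θ p π := mul_phiI_le_psi hp hθ hω0 hπ

end Compound

theorem compound_criterion_minimizer_general (S : Type*) [Fintype S]
    (θ p : S → ℝ) (hp : ∀ s, 0 < p s) (hθ : ∃ s, θ s ≠ 0)
    (ω : ℝ) (hω0 : 0 ≤ ω) (hω1 : ω < 1) :
    StrictConvexOn ℝ (Dset S) (Psi S ω θ p) ∧
      (∃! π : S → ℝ, π ∈ Dset S ∧ ∀ π' ∈ Dset S, Psi S ω θ p π ≤ Psi S ω θ p π') ∧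
      (0 < ω → ∀ π ∈ Dset S,
        ((∀ π' ∈ Dset S, Psi S ω θ p π ≤ Psi S ω θ p π') ↔
          ∀ s : S,
            (PhiE S θ p π) ^ 2 * (PhiI S π * (2 * π s - 1) / (π s * (1 - π s))) =
              ω / (1 - ω) * PhiEstar S θ p * PhiIstar S * (θ s * p s))) := by
  have hconv := strictConvexOn_psi hp hθ hω0 hω1
  refine ⟨hconv, ?_, fun _ π hπ => ?_⟩
  · obtain ⟨π₀, hπ₀, hmin₀⟩ := exists_isMinOn_psi hp hθ hω0 hω1
    refine ⟨π₀, ⟨hπ₀, isMinOn_iff.1 hmin₀⟩, fun π ⟨hπ, hmin⟩ => ?_⟩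
    exact hconv.eq_of_isMinOn (isMinOn_iff.2 hmin) hmin₀ hπ hπ₀
  · rw [← isMinOn_iff, hconv.convexOn.isMinOn_iff_hasFDerivAt_eq_zero isOpen_Dset hπ
      (hasFDerivAt_psi hp hθ ω hπ), dotCLM_eq_zero_iff, funext_iff]
    exact forall_congr' (psiGrad_eq_zero_iff hp hθ hω1 hπ)

/-- Theorem 5.1: for every ethical weight `ω ∈ [0,1)`, the compound criterion `Ψ_ω` is
strictly convex on `(0,1)^S` and has a unique minimizer there; moreover, when `ω > 0`, a
point of `(0,1)^S` is the minimizer iff it satisfies the stationarity equations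
`Φ_E(π)²·∂Φ_I/∂π(s)(π) = (ω/(1−ω))·Φ_E*·Φ_I*·θ(s)·p(s)` for all `s`. -/
theorem compound_criterion_minimizer (S : Type*) [Fintype S] [Nonempty S]
    (θ p : S → ℝ) (hp : ∀ s, 0 < p s) (hθ : ∃ s, θ s ≠ 0)
    (ω : ℝ) (hω0 : 0 ≤ ω) (hω1 : ω < 1) :
    StrictConvexOn ℝ (Dset S) (Psi S ω θ p) ∧
      (∃! π : S → ℝ, π ∈ Dset S ∧ ∀ π' ∈ Dset S, Psi S ω θ p π ≤ Psi S ω θ p π') ∧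
      (0 < ω → ∀ π ∈ Dset S,
        ((∀ π' ∈ Dset S, Psi S ω θ p π ≤ Psi S ω θ p π') ↔
          ∀ s : S,
            (PhiE S θ p π) ^ 2 * (PhiI S π * (2 * π s - 1) / (π s * (1 - π s))) =
              ω / (1 - ω) * PhiEstar S θ p * PhiIstar S * (θ s * p s))) :=
  compound_criterion_minimizer_general S θ p hp hθ ω hω0 hω1
end
end
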